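/- If A = ⟨a_α : α < ω₁⟩ is a proper coherent sequence of subsets of ℕ that has the ScP, then the subspace ω₁ = {α : α < ω₁} of the space (ω₁+1, τ(A)) is countably compact: every countably infinite subset of ω₁ has an accumulation point in ω₁. -/

import Mathlib

open Set

noncomputable section

/-- The least uncountable ordinal `ω₁`. -/
def omega1 : Ordinal := (Cardinal.aleph 1).ord

/-- `⋃_{γ ∈ F} a_γ` for a finite set `F` of indices. -/
def unionFin (a : Ordinal → Set ℕ) (F : Finset Ordinal) : Set ℕ :=
  ⋃ γ ∈ F, a γ

/-- A sequence of subsets of `ℕ`, with indices from a (downward closed) domain `D`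
of ordinals, is coherent if for all `α ≤ β` in the domain there is a finite `F ⊆ α`
with `a α ∩ a β ⊆ ⋃_{γ∈F} a γ` or `a α ⊆ a β ∪ ⋃_{γ∈F} a γ`. -/
def CoherentOn (D : Set Ordinal) (a : Ordinal → Set ℕ) : Prop :=
  ∀ α β : Ordinal, α ≤ β → β ∈ D →
    ∃ F : Finset Ordinal, (∀ γ ∈ F, γ < α) ∧
      (a α ∩ a β ⊆ unionFin a F ∨ a α ⊆ a β ∪ unionFin a F)

/-- Properness: no `a β` is contained in a finite union of earlier terms. -/
def ProperOn (D : Set Ordinal) (a : Ordinal → Set ℕ) : Prop :=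
  ∀ β ∈ D, ∀ F : Finset Ordinal, (∀ γ ∈ F, γ < β) → ¬ a β ⊆ unionFin a F

/-- `â_β = { α ≤ β : a α ∖ a β ⊆ ⋃_{γ∈F} a γ for some finite F ⊆ α }`. -/
def hatA (a : Ordinal → Set ℕ) (β : Ordinal) : Set Ordinal :=
  { α | α ≤ β ∧ ∃ F : Finset Ordinal, (∀ γ ∈ F, γ < α) ∧ a α \ a β ⊆ unionFin a F }

/-- The topology `τ(A)` on `λ + 1 = {α : α ≤ λ}` generated by the subbase
consisting of the sets `â_β` and their complements, `β < λ`. -/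
def tau (lam : Ordinal) (a : Ordinal → Set ℕ) :
    TopologicalSpace {α : Ordinal // α ≤ lam} :=
  TopologicalSpace.generateFrom
    { s | ∃ β < lam, s = {x : {α : Ordinal // α ≤ lam} | x.1 ∈ hatA a β} ∨
                     s = {x : {α : Ordinal // α ≤ lam} | x.1 ∈ hatA a β}ᶜ }

/-- The subspace `ω₁ = {α : α < ω₁}` of `(ω₁+1, τ(A))`. -/
def tauSub (a : Ordinal → Set ℕ) : TopologicalSpace {y : Ordinal // y < omega1} :=
  TopologicalSpace.induced
    (fun y : {y : Ordinal // y < omega1} => (⟨y.1, y.2.le⟩ : {α : Ordinal // α ≤ omega1}))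
    (tau omega1 a)

/-- Closed unbounded subsets of `ω₁`. -/
def IsClub' (C : Set Ordinal) : Prop :=
  C ⊆ Iio omega1 ∧
  (∀ α < omega1, ∃ β ∈ C, α ≤ β) ∧
  (∀ δ, δ < omega1 → δ ≠ 0 → (∀ α < δ, ∃ β ∈ C, α < β ∧ β < δ) → δ ∈ C)

/-- Stationary subsets of `ω₁`: sets meeting every club. -/
def IsStationary' (S : Set Ordinal) : Prop :=
  ∀ C : Set Ordinal, IsClub' C → (S ∩ C).Nonempty

/-- The stationary covering property for a coherent sequence whose index domain is `D`:
if the sequence has length `ω₁` (i.e. `Iio ω₁ ⊆ D`), then every stationary `S ⊆ ω₁`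
together with some finite `F` covers, i.e. `⋃_{γ ∈ S ∪ F} â_γ = ω₁`.  (Sequences of
length `< ω₁` have the ScP by convention.) -/
def HasScP (D : Set Ordinal) (a : Ordinal → Set ℕ) : Prop :=
  Iio omega1 ⊆ D →
    ∀ S : Set Ordinal, S ⊆ Iio omega1 → IsStationary' S →
      ∃ F : Finset Ordinal, (⋃ γ ∈ S ∪ (↑F : Set Ordinal), hatA a γ) = Iio omega1

/-- A node of the tree `2^{≤ω₁}`: a function `val` defined on the ordinals `< len`
(with the canonical value `false` beyond `len`). -/
structure Node where
  len : Ordinal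
  val : Ordinal → Bool
  canon : ∀ α, len ≤ α → val α = false

open Classical in
/-- The restriction `x ↾ β`. -/
def Node.restrict (x : Node) (β : Ordinal) : Node where
  len := β
  val := fun α => if α < β then x.val α else false
  canon := fun α h => if_neg (not_lt.2 h)

/-- `τ.Extends σ` means `σ ⊆ τ`, i.e. `τ` extends `σ`. -/
def Node.Extends (τ σ : Node) : Prop :=
  σ.len ≤ τ.len ∧ ∀ α < σ.len, τ.val α = σ.val α

/-- Successor ordinals. -/
def IsSucc (o : Ordinal) : Prop := ∃ β, o = β + 1

open Classical in
/-- `σ†`: if `σ` has successor length `β+1`, the node agreeing with `σ` except at `β`;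
otherwise `σ` itself. -/
def Node.dagger (σ : Node) : Node :=
  if h : IsSucc σ.len then
    { len := σ.len
      val := fun α => if α = Classical.choose h then !(σ.val α) else σ.val α
      canon := by
        intro α hα
        have hs := Classical.choose_spec h
        have hne : α ≠ Classical.choose h := by
          intro he
          rw [hs, he] at hα
          rw [Ordinal.add_one_eq_succ] at hα
          exact absurd hα (not_le.2 (Order.lt_succ (Classical.choose h)))
        show (if α = Classical.choose h then !(σ.val α) else σ.val α) = false
        rw [if_neg hne]
        exact σ.canon α hα }
  else σ

open Classical in
/-- `σ ⌢ b` : the node `σ` extended by one value `b`. -/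
def Node.snoc (σ : Node) (b : Bool) : Node where
  len := σ.len + 1
  val := fun α => if α = σ.len then b else σ.val α
  canon := by
    intro α hα
    have h1 : σ.len < α := by
      have h2 : σ.len < σ.len + 1 := by
        rw [Ordinal.add_one_eq_succ]; exact Order.lt_succ σ.len
      exact lt_of_lt_of_le h2 hα
    show (if α = σ.len then b else σ.val α) = false
    rw [if_neg h1.ne']
    exact σ.canon α h1.le

open Classical in
/-- `x ⌢ σ` : concatenation of nodes. -/
def Node.append (x σ : Node) : Node where
  len := x.len + σ.len
  val := fun α => if α < x.len then x.val α else σ.val (α - x.len)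
  canon := by
    intro α hα
    have h1 : ¬ α < x.len := not_lt.2 (le_trans (le_self_add (a := x.len) (b := σ.len)) hα)
    show (if α < x.len then x.val α else σ.val (α - x.len)) = false
    rw [if_neg h1]
    apply σ.canon
    by_contra h2
    rw [not_le] at h2
    have h3 : α ≤ x.len + (α - x.len) := Ordinal.le_add_sub α x.len
    have h4 : x.len + (α - x.len) < x.len + σ.len := add_lt_add_of_le_of_lt (le_refl x.len) h2
    exact absurd hα (not_le.2 (lt_of_le_of_lt h3 h4))

/-- A subtree of `2^{<ω₁}` that is downward closed, twinned and has no maximal elements. -/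
structure GoodTree (Γ : Set Node) : Prop where
  lt_omega1 : ∀ σ ∈ Γ, σ.len < omega1
  downward : ∀ σ ∈ Γ, ∀ β ≤ σ.len, σ.restrict β ∈ Γ
  twinned : ∀ σ ∈ Γ, σ.dagger ∈ Γ
  noMax : ∀ σ ∈ Γ, ∃ τ ∈ Γ, σ.len < τ.len ∧ τ.Extends σ

/-- `X(Γ)`: the maximal branches of `Γ`, i.e. the minimal elements of `2^{≤ω₁} ∖ Γ`. -/
def XGamma (Γ : Set Node) : Set Node :=
  { x | x.len ≤ omega1 ∧ x ∉ Γ ∧ ∀ β < x.len, x.restrict β ∈ Γ }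

/-- The index domain of the branch sequence `A_{Γ,x}`. -/
def branchDomain (Γ : Set Node) (x : Node) : Set Ordinal :=
  { α | α + 1 ≤ x.len ∧ x.restrict (α + 1) ∈ Γ }

/-- The branch sequence `A_{Γ,x}`, `a^x_α = a_{x ↾ (α+1)}`. -/
def branchSeq (a : Node → Set ℕ) (x : Node) : Ordinal → Set ℕ :=
  fun α => a (x.restrict (α + 1))

/-- A `𝕋`-algebra on the tree `Γ`. -/
structure IsTAlgebra (Γ : Set Node) (a : Node → Set ℕ) : Prop where
  tree : GoodTree Γ
  empty_of_not_succ : ∀ σ ∈ Γ, ¬ IsSucc σ.len → a σ = ∅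
  compl_dagger : ∀ σ ∈ Γ, IsSucc σ.len → a σ.dagger = (a σ)ᶜ
  branch_coherent : ∀ x : Node, x.len ≤ omega1 →
    CoherentOn (branchDomain Γ x) (branchSeq a x)
  branch_proper : ∀ x : Node, x.len ≤ omega1 →
    ProperOn (branchDomain Γ x) (branchSeq a x)

/-- The Boolean subalgebra of `P(ℕ)` generated by a family `G`. -/
inductive GenBool (G : Set (Set ℕ)) : Set ℕ → Prop
  | basic (s : Set ℕ) : s ∈ G → GenBool G s
  | empty : GenBool G ∅
  | compl (s : Set ℕ) : GenBool G s → GenBool G sᶜ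
  | inter (s t : Set ℕ) : GenBool G s → GenBool G t → GenBool G (s ∩ t)

/-- `B_Γ`: the Boolean subalgebra of `P(ℕ)` generated by `{a_σ : σ ∈ Γ}`. -/
def BGamma (Γ : Set Node) (a : Node → Set ℕ) : Set (Set ℕ) :=
  { b | GenBool { s | ∃ σ ∈ Γ, s = a σ } b }

/-- A finite intersection from the family `{ℕ ∖ a_{x↾(α+1)} : α + 1 ≤ λ_x}`. -/
def finInterCompl (a : Node → Set ℕ) (x : Node) (F : Finset Ordinal) : Set ℕ :=
  ⋂ α ∈ F, (a (x.restrict (α + 1)))ᶜ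

/-- The ultrafilter `U_x` on `B_Γ` generated by the finite intersections of
`{ℕ ∖ a_{x↾(α+1)} : α + 1 ≤ λ_x}`. -/
def Ux (Γ : Set Node) (a : Node → Set ℕ) (x : Node) : Set (Set ℕ) :=
  { b | b ∈ BGamma Γ a ∧
    ∃ F : Finset Ordinal, (∀ α ∈ F, α + 1 ≤ x.len) ∧ finInterCompl a x F ⊆ b }

/-- The Stone topology on `X(Γ)`, with subbasic open sets `{z : b ∈ U_z}`, `b ∈ B_Γ`. -/
def stoneTop (Γ : Set Node) (a : Node → Set ℕ) :
    TopologicalSpace {z : Node // z ∈ XGamma Γ} :=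
  TopologicalSpace.generateFrom
    { s | ∃ b ∈ BGamma Γ a, s = { z : {z : Node // z ∈ XGamma Γ} | b ∈ Ux Γ a z.1 } }

/-- An ultrafilter on a Boolean subalgebra `B` of `P(ℕ)`. -/
def IsUltrafilterOn (B U : Set (Set ℕ)) : Prop :=
  U ⊆ B ∧
  (∀ s ∈ U, ∀ t ∈ U, s ∩ t ∈ U) ∧
  (∀ s ∈ U, ∀ t ∈ B, s ⊆ t → t ∈ U) ∧
  ∅ ∉ U ∧
  (∀ b ∈ B, Xor' (b ∈ U) (bᶜ ∈ U))

/-- The length-lexicographic (strict) order on finite binary strings. -/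
def LenLexLT (σ τ : Node) : Prop :=
  σ.len < τ.len ∨ (σ.len = τ.len ∧ ∃ i < σ.len, σ.val i = false ∧ τ.val i = true ∧
    ∀ j < i, σ.val j = τ.val j)

/-- `e` is the standard length-lexicographic enumeration of `2^{<ω}`. -/
def IsStdEnum (e : ℕ → Node) : Prop :=
  (∀ k, (e k).len < Ordinal.omega0) ∧
  (∀ σ : Node, σ.len < Ordinal.omega0 → ∃ k, e k = σ) ∧
  (∀ k l : ℕ, k < l → LenLexLT (e k) (e l))

/-- `⋃_{k<n} c^x_k` where `c^x_n = a^x_{e(n)} ∖ ⋃_{k<n} c^x_k` (recursively). -/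
def cUnion (a : Node → Set ℕ) (x : Node) (eb : ℕ → Ordinal) : ℕ → Set ℕ
  | 0 => ∅
  | n + 1 => cUnion a x eb n ∪ (a (x.restrict (eb n + 1)) \ cUnion a x eb n)

/-- `c^x_n = a^x_{e(n)} ∖ ⋃_{k<n} c^x_k`. -/
def cSeq (a : Node → Set ℕ) (x : Node) (eb : ℕ → Ordinal) (n : ℕ) : Set ℕ :=
  a (x.restrict (eb n + 1)) \ cUnion a x eb n

/-- `{x ⌢ σ : σ ∈ 2^{<ω}}`. -/
def appendSet (x : Node) : Set Node :=
  { τ | ∃ σ : Node, σ.len < Ordinal.omega0 ∧ τ = x.append σ }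

/-- The defining equations of the extension `A_Γ[π,x]`:
`a_x = ∅`, `a_{x⌢(σ⌢0)} = ⋃{c^x_k : σ⌢1 ⊆ σ_{π(k)}}`, `a_{x⌢(σ⌢1)} = ℕ ∖ a_{x⌢(σ⌢0)}`. -/
def ExtEquations (e : ℕ → Node) (π : ℕ → ℕ) (a : Node → Set ℕ) (x : Node)
    (eb : ℕ → Ordinal) (a' : Node → Set ℕ) : Prop :=
  a' x = ∅ ∧
  ∀ σ : Node, σ.len < Ordinal.omega0 →
    (a' (x.append (σ.snoc false)) =
      ⋃ k ∈ { k : ℕ | (e (π k)).Extends (σ.snoc true) }, cSeq a x eb k) ∧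
    (a' (x.append (σ.snoc true)) = (a' (x.append (σ.snoc false)))ᶜ)

/-- The full tree `2^{<ω₁}`. -/
def GammaFull : Set Node := { σ | σ.len < omega1 }

theorem natLtOmega1 (n : ℕ) : (n : Ordinal) < omega1 := by
  have h1 : (n : Ordinal) < Ordinal.omega0 := Ordinal.nat_lt_omega0 n
  have h2 : Ordinal.omega0 < omega1 := by
    rw [omega1, ← Cardinal.ord_aleph0]
    exact Cardinal.ord_lt_ord.2 (by rw [← Cardinal.aleph_zero]
                                    exact Cardinal.aleph_lt_aleph.2 zero_lt_one)
  exact h1.trans h2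


/-!
By the ScP, some `â_β` with `β < ω₁` contains infinitely many points of `X`. Indeed, enumerate
infinitely many points `y₀, y₁, …` of `X`. If for every `n` the tail `{yₘ : m ≥ n}` meets `â_γ`
for club many `γ`, a `γ` in the intersection of these countably many clubs has infinitely many
`yₘ` in `â_γ`. Otherwise, for some `n` the `γ` whose `â_γ` misses the tail form a stationary
set, which together with finitely many further `γ` covers `ω₁`; so finitely many `â_γ` cover the
whole tail.

Let `β` be least such that `X ∩ â_β` is infinite. Coherence and properness show that for every
subbasic neighbourhood `s` of `β`, the set `â_β ∖ s` is covered by finitely many `â_ξ` with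
`ξ < β`, each of which meets `X` in a finite set. Hence every neighbourhood of `β` contains all
but finitely many points of `X ∩ â_β`, and `β` is an accumulation point of `X`.
-/

open Filter Topology

theorem omega1_isSuccLimit : Order.IsSuccLimit omega1 :=
  Cardinal.isSuccLimit_ord Cardinal.aleph0_lt_aleph_one.le

theorem omega1_pos : 0 < omega1 :=
  omega1_isSuccLimit.pos

theorem succ_lt_omega1 {α : Ordinal} (h : α < omega1) : Order.succ α < omega1 :=
  omega1_isSuccLimit.succ_lt h

theorem iSup_lt_omega1 {f : ℕ → Ordinal} (hf : ∀ n, f n < omega1) : ⨆ n, f n < omega1 :=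
  Ordinal.lift_iSup_lt_of_lt_cof (by simp [omega1]) hf

theorem isClub'_iInter {C : ℕ → Set Ordinal} (hC : ∀ k, IsClub' (C k)) :
    IsClub' (⋂ k, C k) := by
  have hnext : ∀ k η, η < omega1 → ∃ β ∈ C k, η < β ∧ β < omega1 := by
    intro k η hη
    obtain ⟨β, hβC, hβ⟩ := (hC k).2.1 _ (succ_lt_omega1 hη)
    exact ⟨β, hβC, Order.succ_le_iff.1 hβ, (hC k).1 hβC⟩
  choose! next hnextC hlt_next hnext_lt using hnext
  refine ⟨fun β hβ => (hC 0).1 (mem_iInter.1 hβ 0), fun α hα => ?_, fun δ hδ hδ0 hcof =>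
    mem_iInter.2 fun k => (hC k).2.2 δ hδ hδ0 fun η hη => ?_⟩
  · -- close `α` off under all the `next k` in `ω` rounds
    let s : ℕ → Ordinal := fun m => Nat.rec α (fun _ η => ⨆ k, next k η) m
    have hs : ∀ m, s m < omega1 := fun m => by
      induction m with
      | zero => exact hα
      | succ m ih => exact iSup_lt_omega1 fun k => hnext_lt k _ ih
    have hnext_le : ∀ k m, next k (s m) ≤ s (m + 1) := fun k m =>
      Ordinal.le_iSup (fun k => next k (s m)) k
    have hs_lt : ∀ m, s m < s (m + 1) := fun m =>
      (hlt_next 0 _ (hs m)).trans_le (hnext_le 0 m)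
    have hs_le : ∀ m, s m ≤ ⨆ m, s m := Ordinal.le_iSup s
    refine ⟨⨆ m, s m, mem_iInter.2 fun k => (hC k).2.2 _ (iSup_lt_omega1 hs) ?_ ?_, hs_le 0⟩
    · exact ((hs_lt 0).trans_le (hs_le 1)).ne_bot
    · intro η hη
      obtain ⟨m, hm⟩ := Ordinal.lt_iSup_iff.1 hη
      exact ⟨next k (s m), hnextC k _ (hs m), hm.trans (hlt_next k _ (hs m)),
        (hnext_le k m).trans_lt ((hs_lt (m + 1)).trans_le (hs_le (m + 2)))⟩
  · obtain ⟨β, hβ, hηβ⟩ := hcof η hη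
    exact ⟨β, mem_iInter.1 hβ k, hηβ⟩

theorem isStationary'_Iio_diff {U : Set Ordinal} (hU : ¬ ∃ C, IsClub' C ∧ C ⊆ U) :
    IsStationary' (Iio omega1 \ U) := by
  intro C hC
  by_contra hempty
  refine hU ⟨C, hC, fun γ hγ => ?_⟩
  by_contra hγU
  exact hempty ⟨γ, ⟨hC.1 hγ, hγU⟩, hγ⟩

section Coherent

variable {a : Ordinal → Set ℕ} {α β γ : Ordinal}

theorem mem_unionFin {F : Finset Ordinal} {n : ℕ} : n ∈ unionFin a F ↔ ∃ γ ∈ F, n ∈ a γ := by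
  simp [unionFin]

theorem unionFin_mono {F G : Finset Ordinal} (h : F ⊆ G) : unionFin a F ⊆ unionFin a G :=
  biUnion_mono h fun _ _ => subset_rfl

theorem mem_hatA_self (a : Ordinal → Set ℕ) (β : Ordinal) : β ∈ hatA a β :=
  ⟨le_rfl, ∅, by simp, by simp⟩

theorem inter_subset_unionFin_of_notMem_hatA (hcoh : CoherentOn (Iio omega1) a)
    (hαγ : α ≤ γ) (hγ : γ < omega1) (h : α ∉ hatA a γ) :
    ∃ F : Finset Ordinal, (∀ ξ ∈ F, ξ < α) ∧ a α ∩ a γ ⊆ unionFin a F := by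
  obtain ⟨F, hF, hinter | hdiff⟩ := hcoh α γ hαγ hγ
  · exact ⟨F, hF, hinter⟩
  · exact absurd ⟨hαγ, F, hF, fun n hn => (hdiff hn.1).resolve_left hn.2⟩ h

theorem exists_mem_hatA_of_subset_unionFin (hcoh : CoherentOn (Iio omega1) a)
    (hprop : ProperOn (Iio omega1) a) (hα : α < omega1) {H F : Finset Ordinal}
    (hH : ∀ ξ ∈ H, ξ < omega1) (hF : ∀ ξ ∈ F, ξ < α)
    (hcov : a α ⊆ unionFin a H ∪ unionFin a F) :
    ∃ ξ ∈ H, α ∈ hatA a ξ := by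
  by_contra! hnot
  -- otherwise every `a α ∩ a ξ`, `ξ ∈ H`, is covered by sets below `α`, against properness
  have hsmall : ∀ ξ, ∃ G : Finset Ordinal, (∀ δ ∈ G, δ < α) ∧
      (ξ ∈ H → a α ∩ a ξ ⊆ unionFin a G) := by
    intro ξ
    by_cases hξ : ξ ∈ H
    · rcases lt_or_ge ξ α with hξα | hαξ
      · exact ⟨{ξ}, by simpa using hξα, fun _ n hn => mem_unionFin.2 ⟨ξ, by simp, hn.2⟩⟩
      · obtain ⟨G, hG, hGcov⟩ :=
          inter_subset_unionFin_of_notMem_hatA hcoh hαξ (hH ξ hξ) (hnot ξ hξ)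
        exact ⟨G, hG, fun _ => hGcov⟩
    · exact ⟨∅, by simp, fun h => absurd h hξ⟩
  choose G hG hGcov using hsmall
  refine hprop α hα (F ∪ H.biUnion G) (fun δ hδ => ?_) fun n hn => ?_
  · simp only [Finset.mem_union, Finset.mem_biUnion] at hδ
    rcases hδ with hδ | ⟨ξ, -, hδ⟩
    exacts [hF δ hδ, hG ξ δ hδ]
  · rcases hcov hn with hnH | hnF
    · obtain ⟨ξ, hξ, hnξ⟩ := mem_unionFin.1 hnH
      exact unionFin_mono (Finset.subset_union_right.trans' (Finset.subset_biUnion_of_mem G hξ))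
        (hGcov ξ hξ ⟨hn, hnξ⟩)
    · exact unionFin_mono Finset.subset_union_left hnF

theorem hatA_diff_subset_of_mem_hatA (hcoh : CoherentOn (Iio omega1) a)
    (hprop : ProperOn (Iio omega1) a) (hβ : β < omega1) (hγ : γ < omega1)
    (h : β ∈ hatA a γ) :
    ∃ H : Finset Ordinal, (∀ ξ ∈ H, ξ < β) ∧ hatA a β \ hatA a γ ⊆ ⋃ ξ ∈ H, hatA a ξ := by
  obtain ⟨hβγ, H, hH, hHcov⟩ := h
  refine ⟨H, hH, ?_⟩
  rintro α ⟨⟨hαβ, F₁, hF₁, hF₁cov⟩, hαγ⟩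
  obtain ⟨F₂, hF₂, hF₂cov⟩ := inter_subset_unionFin_of_notMem_hatA hcoh (hαβ.trans hβγ) hγ hαγ
  have hcov : a α ⊆ unionFin a H ∪ unionFin a (F₁ ∪ F₂) := by
    intro n hn
    by_cases hnγ : n ∈ a γ
    · exact Or.inr (unionFin_mono Finset.subset_union_right (hF₂cov ⟨hn, hnγ⟩))
    by_cases hnβ : n ∈ a β
    · exact Or.inl (hHcov ⟨hnβ, hnγ⟩)
    · exact Or.inr (unionFin_mono Finset.subset_union_left (hF₁cov ⟨hn, hnβ⟩))
  obtain ⟨ξ, hξ, hαξ⟩ := exists_mem_hatA_of_subset_unionFin hcoh hprop (hαβ.trans_lt hβ)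
    (fun ξ hξ => (hH ξ hξ).trans hβ) (Finset.forall_mem_union.2 ⟨hF₁, hF₂⟩) hcov
  exact mem_biUnion hξ hαξ

theorem hatA_inter_subset_of_notMem_hatA (hcoh : CoherentOn (Iio omega1) a)
    (hprop : ProperOn (Iio omega1) a) (hβ : β < omega1) (hγ : γ < omega1)
    (h : β ∉ hatA a γ) :
    ∃ H : Finset Ordinal, (∀ ξ ∈ H, ξ < β) ∧ hatA a β ∩ hatA a γ ⊆ ⋃ ξ ∈ H, hatA a ξ := by
  rcases lt_or_ge γ β with hγβ | hβγ
  · exact ⟨{γ}, by simpa using hγβ, fun α hα => by simpa using hα.2⟩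
  obtain ⟨H, hH, hHcov⟩ := inter_subset_unionFin_of_notMem_hatA hcoh hβγ hγ h
  refine ⟨H, hH, ?_⟩
  rintro α ⟨⟨hαβ, F₁, hF₁, hF₁cov⟩, ⟨-, F₂, hF₂, hF₂cov⟩⟩
  have hcov : a α ⊆ unionFin a H ∪ unionFin a (F₁ ∪ F₂) := by
    intro n hn
    by_cases hnβ : n ∈ a β
    · by_cases hnγ : n ∈ a γ
      · exact Or.inl (hHcov ⟨hnβ, hnγ⟩)
      · exact Or.inr (unionFin_mono Finset.subset_union_right (hF₂cov ⟨hn, hnγ⟩))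
    · exact Or.inr (unionFin_mono Finset.subset_union_left (hF₁cov ⟨hn, hnβ⟩))
  obtain ⟨ξ, hξ, hαξ⟩ := exists_mem_hatA_of_subset_unionFin hcoh hprop (hαβ.trans_lt hβ)
    (fun ξ hξ => (hH ξ hξ).trans hβ) (Finset.forall_mem_union.2 ⟨hF₁, hF₂⟩) hcov
  exact mem_biUnion hξ hαξ

end Coherent

theorem exists_infinite_inter_hatA {a : Ordinal → Set ℕ} (hScP : HasScP (Iio omega1) a)
    {Y : Set Ordinal} (hY : Y ⊆ Iio omega1) (hYinf : Y.Infinite) :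
    ∃ β < omega1, (Y ∩ hatA a β).Infinite := by
  let y : ℕ → Ordinal := fun n => hYinf.natEmbedding Y n
  have hy : y.Injective := Subtype.val_injective.comp (hYinf.natEmbedding Y).injective
  suffices ∃ β < omega1, {n | y n ∈ hatA a β}.Infinite by
    obtain ⟨β, hβ, hinf⟩ := this
    refine ⟨β, hβ, (hinf.image hy.injOn).mono ?_⟩
    rintro _ ⟨n, hn, rfl⟩
    exact ⟨(hYinf.natEmbedding Y n).2, hn⟩
  by_contra! hfin
  let tail : ℕ → Set Ordinal := fun n => {γ | ∃ m ≥ n, y m ∈ hatA a γ}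
  by_cases hclub : ∀ n, ∃ C, IsClub' C ∧ C ⊆ tail n
  · choose C hC hCtail using hclub
    obtain ⟨γ, hγC, -⟩ := (isClub'_iInter hC).2.1 0 omega1_pos
    exact Nat.frequently_atTop_iff_infinite.1
      (frequently_atTop.2 fun n => hCtail n (mem_iInter.1 hγC n))
      (hfin γ ((isClub'_iInter hC).1 hγC))
  · obtain ⟨n, hn⟩ := not_forall.1 hclub
    obtain ⟨F, hF⟩ := hScP subset_rfl _ sdiff_subset (isStationary'_Iio_diff hn)
    have hF_lt : ∀ γ ∈ F, γ < omega1 := fun γ hγ => by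
      rw [← mem_Iio, ← hF]
      exact mem_biUnion (Or.inr hγ) (mem_hatA_self a γ)
    -- the stationary part of the cover misses the whole tail, so `F` alone covers it
    have hcov : Ici n ⊆ ⋃ γ ∈ F, {m | y m ∈ hatA a γ} := by
      intro m hm
      have hym : y m ∈ ⋃ γ ∈ Iio omega1 \ tail n ∪ ↑F, hatA a γ := by
        rw [hF]
        exact hY (hYinf.natEmbedding Y m).2
      simp only [mem_iUnion, exists_prop] at hym
      obtain ⟨γ, hγS | hγF, hyγ⟩ := hym
      · exact absurd ⟨m, hm, hyγ⟩ hγS.2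
      · exact mem_biUnion hγF hyγ
    exact Ici_infinite n ((F.finite_toSet.biUnion fun γ hγ => hfin γ (hF_lt γ hγ)).subset hcov)

theorem accPt_of_cofinite_inf_principal_le_nhds {Z : Type*} [TopologicalSpace Z] {z : Z}
    {s : Set Z} (hs : s.Infinite) (h : cofinite ⊓ 𝓟 s ≤ 𝓝 z) :
    AccPt z (𝓟 s) :=
  hs.cofinite_inf_principal_neBot.mono <| le_inf (le_inf h
    (inf_le_left.trans (le_principal_iff.2 (finite_singleton z).compl_mem_cofinite)))
    inf_le_right

theorem cofinite_inf_principal_le_nhds_tau {a : Ordinal → Set ℕ}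
    (hcoh : CoherentOn (Iio omega1) a) (hprop : ProperOn (Iio omega1) a)
    {X : Set {α : Ordinal // α ≤ omega1}} {β : Ordinal} (hβ : β < omega1)
    (hmin : ∀ ξ < β, (X ∩ Subtype.val ⁻¹' hatA a ξ).Finite) :
    cofinite ⊓ 𝓟 (X ∩ Subtype.val ⁻¹' hatA a β) ≤
      @nhds _ (tau omega1 a) ⟨β, hβ.le⟩ := by
  refine tendsto_id'.1 (TopologicalSpace.tendsto_nhds_generateFrom_iff.2 ?_)
  rintro s ⟨γ, hγ, rfl | rfl⟩ hβs <;>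
    rw [mem_inf_principal, mem_cofinite]
  · obtain ⟨H, hH, hHcov⟩ := hatA_diff_subset_of_mem_hatA hcoh hprop hβ hγ hβs
    refine (H.finite_toSet.biUnion fun ξ hξ => hmin ξ (hH ξ hξ)).subset fun x hx => ?_
    obtain ⟨⟨hxX, hxβ⟩, hxγ⟩ := Classical.not_imp.1 hx
    obtain ⟨ξ, hξ, hxξ⟩ := mem_iUnion₂.1 (hHcov ⟨hxβ, hxγ⟩)
    exact mem_biUnion hξ ⟨hxX, hxξ⟩
  · obtain ⟨H, hH, hHcov⟩ := hatA_inter_subset_of_notMem_hatA hcoh hprop hβ hγ hβs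
    refine (H.finite_toSet.biUnion fun ξ hξ => hmin ξ (hH ξ hξ)).subset fun x hx => ?_
    obtain ⟨⟨hxX, hxβ⟩, hxγ⟩ := Classical.not_imp.1 hx
    obtain ⟨ξ, hξ, hxξ⟩ := mem_iUnion₂.1 (hHcov ⟨hxβ, not_not.1 hxγ⟩)
    exact mem_biUnion hξ ⟨hxX, hxξ⟩

theorem stmt9_general (a : Ordinal → Set ℕ)
    (hcoh : CoherentOn (Iio omega1) a) (hprop : ProperOn (Iio omega1) a)
    (hScP : HasScP (Iio omega1) a)
    (X : Set {α : Ordinal // α ≤ omega1}) (hXsub : ∀ x ∈ X, x.1 < omega1)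
    (hXinf : X.Infinite) :
    ∃ y : {α : Ordinal // α ≤ omega1}, y.1 < omega1 ∧
      ∀ U : Set {α : Ordinal // α ≤ omega1},
        @IsOpen _ (tau omega1 a) U → y ∈ U → ∃ x ∈ X, x ≠ y ∧ x ∈ U := by
  let _ := tau omega1 a
  obtain ⟨β₀, hβ₀, hinf₀⟩ := exists_infinite_inter_hatA hScP (Y := Subtype.val '' X)
    (by rintro _ ⟨x, hx, rfl⟩; exact hXsub x hx) (hXinf.image Subtype.val_injective.injOn)
  rw [← image_inter_preimage] at hinf₀
  obtain ⟨β, ⟨hβ, hinf⟩, hmin⟩ :=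
    wellFounded_lt.has_min {β | β < omega1 ∧ (X ∩ Subtype.val ⁻¹' hatA a β).Infinite}
      ⟨β₀, hβ₀, hinf₀.of_image _⟩
  have hacc : AccPt (⟨β, hβ.le⟩ : {α // α ≤ omega1}) (𝓟 X) :=
    (accPt_of_cofinite_inf_principal_le_nhds hinf <| cofinite_inf_principal_le_nhds_tau hcoh hprop
      hβ fun ξ hξ => not_not.1 fun h => hmin ξ ⟨hξ.trans hβ, h⟩ hξ).mono
      (principal_mono.2 inter_subset_left)
  refine ⟨⟨β, hβ.le⟩, hβ, fun U hU hβU => ?_⟩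
  obtain ⟨x, ⟨hxU, hxX⟩, hxβ⟩ := accPt_iff_nhds.1 hacc U (hU.mem_nhds hβU)
  exact ⟨x, hxX, hxβ, hxU⟩

/-- If a proper coherent sequence `A = ⟨a_α : α < ω₁⟩` has the ScP, then the
subspace `ω₁` of `(ω₁+1, τ(A))` is countably compact: every countably infinite
subset of `ω₁` has an accumulation point in `ω₁`. -/
theorem stmt9 (a : Ordinal → Set ℕ)
    (hcoh : CoherentOn (Iio omega1) a) (hprop : ProperOn (Iio omega1) a)
    (hScP : HasScP (Iio omega1) a)
    (X : Set {α : Ordinal // α ≤ omega1}) (hXsub : ∀ x ∈ X, x.1 < omega1)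
    (hXcount : X.Countable) (hXinf : X.Infinite) :
    ∃ y : {α : Ordinal // α ≤ omega1}, y.1 < omega1 ∧
      ∀ U : Set {α : Ordinal // α ≤ omega1},
        @IsOpen _ (tau omega1 a) U → y ∈ U → ∃ x ∈ X, x ≠ y ∧ x ∈ U :=
  stmt9_general a hcoh hprop hScP X hXsub hXinf

end
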